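/- arXiv:1402.4443 — 3 statements merged into one kernel-verified Lean document; each statement's English description precedes it below -/
import Mathlib

section
/- Let φ ∈ C_c^∞(ℝⁿ) be a nonnegative radial function supported in the unit ball, nonincreasing in the radius, with φ(x) = 1 whenever |x| ≤ 3/4. Let α, β > 0 and let μ be a finite real signed Borel measure on ℝⁿ such that for some constant C and every finite collection of balls B_{r_j}(x_j) for which the enlarged balls B_{3r_j}(x_j) are pairwise disjoint, Σ_j | ∫_{ℝⁿ} φ( (x_j + y)/(3 r_j) ) dμ(y) | ≤ C (Σ_j r_j^α)^β. Then dim μ ≥ α, i.e. μ(F) = 0 for every Borel set F with Hausdorff dimension dimH F < α. -/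
open MeasureTheory

/-- Integral of a real function against a finite signed Borel measure,
via the Jordan decomposition. -/
noncomputable def sintegral {X : Type*} [MeasurableSpace X] (μ : SignedMeasure X)
    (g : X → ℝ) : ℝ :=
  (∫ x, g x ∂μ.toJordanDecomposition.posPart) - ∫ x, g x ∂μ.toJordanDecomposition.negPart

/-!
Write `μ = p - q` (Jordan decomposition) and `ν = p + q`. On a ball `B(x, 3r)`, the bump integral
`∫ φ dp - ∫ φ dq` is at least `p(B(x, 9r/4)) - q(B(x, 3r))`, so the hypothesis bounds
`∑ p(B(x, 9r/4))` by `C (∑ r^α)^β + ∑ q(B(x, 3r))` over disjoint balls.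

Let `μH[α] E = 0` and `q E = 0`. By the mass distribution principle, `ν`-almost every point of `E`
has infinite upper `α`-density for `ν`, and at such a point there are arbitrarily small radii with
`ν(B(x, 3r)) ≤ (4/3)^α ν(B(x, 9r/4))` and `ν(B(x, 9r/4)) ≥ T r^α`. A Besicovitch covering of
almost all of `E` by disjoint such balls inside an open set of small `q`-measure has
`∑ r^α ≤ ν(X)/T`, so `∑ p(B(x, 9r/4))` is small; by doubling so is `ν(E)`, and `T → ∞` gives
`p(E) = 0`. Mutual singularity of `p` and `q` then yields `p(F) = q(F) = 0`.
-/

open Metric Set Filter Topology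
open scoped ENNReal NNReal

section BumpFunction

variable {E : Type*} [NormedAddCommGroup E] [NormedSpace ℝ E] {φ : E → ℝ} {R : ℝ}

lemma indicator_closedBall_le_bump (hφ0 : ∀ x, 0 ≤ φ x) (hφ1 : ∀ x : E, ‖x‖ ≤ 3 / 4 → φ x = 1)
    (hR : 0 < R) (z y : E) : (closedBall z (3 / 4 * R)).indicator 1 y ≤ φ (R⁻¹ • (y - z)) := by
  by_cases hy : y ∈ closedBall z (3 / 4 * R)
  · rw [indicator_of_mem hy, Pi.one_apply, hφ1]
    rw [mem_closedBall, dist_eq_norm] at hy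
    rw [norm_smul, norm_inv, Real.norm_of_nonneg hR.le, inv_mul_le_iff₀ hR]
    linarith
  · rw [indicator_of_notMem hy]
    exact hφ0 _

lemma bump_le_indicator_closedBall (hφ1 : ∀ x, φ x ≤ 1) (hφsupp : tsupport φ ⊆ closedBall 0 1)
    (hR : 0 < R) (z y : E) : φ (R⁻¹ • (y - z)) ≤ (closedBall z R).indicator 1 y := by
  by_cases hy : y ∈ closedBall z R
  · rw [indicator_of_mem hy]
    exact hφ1 _
  · rw [indicator_of_notMem hy]
    refine (image_eq_zero_of_notMem_tsupport fun h => hy ?_).le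
    have := hφsupp h
    rwa [mem_closedBall_zero_iff, norm_smul, norm_inv, Real.norm_of_nonneg hR.le,
      inv_mul_le_iff₀ hR, mul_one, ← dist_eq_norm] at this

variable [MeasurableSpace E] [BorelSpace E] (ν : Measure E) [IsFiniteMeasure ν]

lemma integrable_bump (hφ : Measurable φ) (hφ0 : ∀ x, 0 ≤ φ x) (hφ1 : ∀ x, φ x ≤ 1) (z : E) :
    Integrable (fun y => φ (R⁻¹ • (y - z))) ν :=
  .of_bound (hφ.comp (by fun_prop)).aestronglyMeasurable 1 <| ae_of_all _ fun y => by
    rw [Real.norm_of_nonneg (hφ0 _)]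
    exact hφ1 _

lemma measureReal_closedBall_le_integral_bump (hφ : Measurable φ) (hφ0 : ∀ x, 0 ≤ φ x)
    (hφ1 : ∀ x, φ x ≤ 1) (hφone : ∀ x : E, ‖x‖ ≤ 3 / 4 → φ x = 1) (hR : 0 < R) (z : E) :
    ν.real (closedBall z (3 / 4 * R)) ≤ ∫ y, φ (R⁻¹ • (y - z)) ∂ν := by
  rw [← integral_indicator_one measurableSet_closedBall]
  exact integral_mono ((integrable_const 1).indicator measurableSet_closedBall)
    (integrable_bump ν hφ hφ0 hφ1 z) (indicator_closedBall_le_bump hφ0 hφone hR z)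

lemma integral_bump_le_measureReal_closedBall (hφ : Measurable φ) (hφ0 : ∀ x, 0 ≤ φ x)
    (hφ1 : ∀ x, φ x ≤ 1) (hφsupp : tsupport φ ⊆ closedBall 0 1) (hR : 0 < R) (z : E) :
    ∫ y, φ (R⁻¹ • (y - z)) ∂ν ≤ ν.real (closedBall z R) := by
  rw [← integral_indicator_one measurableSet_closedBall]
  exact integral_mono (integrable_bump ν hφ hφ0 hφ1 z)
    ((integrable_const 1).indicator measurableSet_closedBall)
    (bump_le_indicator_closedBall hφ1 hφsupp hR z)

end BumpFunction

section Density

variable {X : Type*} [MetricSpace X] [MeasurableSpace X]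

lemma measure_le_ofReal_mul_hausdorffMeasure [BorelSpace X] (ν : Measure X) {α M s₀ : ℝ}
    (hα : 0 ≤ α) (hM : 0 < M) (hs₀ : 0 < s₀) {A : Set X}
    (hA : ∀ x ∈ A, ∀ s ∈ Ioc 0 s₀, ν (closedBall x s) ≤ ENNReal.ofReal (M * s ^ α)) :
    ν A ≤ ENNReal.ofReal M * μH[α] A := by
  have hsmall : ∀ t : Set X, ediam t ≤ ENNReal.ofReal (s₀ / 2) →
      ν (t ∩ A) ≤ ENNReal.ofReal M * ediam t ^ α := by
    intro t ht
    rcases (t ∩ A).eq_empty_or_nonempty with hempty | ⟨x, hxt, hxA⟩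
    · simp [hempty]
    have hfin : ediam t ≠ ∞ := ne_top_of_le_ne_top ENNReal.ofReal_ne_top ht
    have hd : diam t < s₀ := by
      have := ENNReal.toReal_mono ENNReal.ofReal_ne_top ht
      rw [ENNReal.toReal_ofReal (by positivity)] at this
      exact this.trans_lt (by linarith)
    -- a limit, because the hypothesis says nothing about the radius `diam t` when it is `0`
    have hclose : ∀ᶠ s in 𝓝[>] diam t, ν (t ∩ A) ≤ ENNReal.ofReal (M * s ^ α) := by
      filter_upwards [Ioo_mem_nhdsGT hd] with s hs
      refine (measure_mono fun y hy => ?_).trans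
        (hA x hxA s ⟨diam_nonneg.trans_lt hs.1, hs.2.le⟩)
      exact (dist_le_diam_of_mem (isBounded_iff_ediam_ne_top.2 hfin) hy.1 hxt).trans hs.1.le
    have hlim : Tendsto (fun s => ENNReal.ofReal (M * s ^ α)) (𝓝[>] diam t)
        (𝓝 (ENNReal.ofReal (M * diam t ^ α))) :=
      (ENNReal.continuous_ofReal.tendsto _).comp <| ((continuousAt_const.mul
        (Real.continuousAt_rpow_const _ _ (Or.inr hα))).tendsto).mono_left nhdsWithin_le_nhds
    calc ν (t ∩ A) ≤ ENNReal.ofReal (M * diam t ^ α) := ge_of_tendsto hlim hclose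
      _ = ENNReal.ofReal M * ediam t ^ α := by
        rw [ENNReal.ofReal_mul hM.le, ← ENNReal.ofReal_rpow_of_nonneg diam_nonneg hα, diam,
          ENNReal.ofReal_toReal hfin]
  have hmk := OuterMeasure.le_mkMetric (ENNReal.ofReal M • fun d => d ^ α)
    (OuterMeasure.restrict A ν.toOuterMeasure) _ (ENNReal.ofReal_pos.2 (half_pos hs₀))
    (fun t ht => by simpa [OuterMeasure.restrict_apply] using hsmall t ht)
  rw [OuterMeasure.mkMetric_smul _ ENNReal.ofReal_ne_top (ENNReal.ofReal_pos.2 hM).ne'] at hmk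
  simpa [OuterMeasure.restrict_apply, Measure.hausdorffMeasure, ← Measure.mkMetric_toOuterMeasure]
    using hmk A

def HasFiniteUpperDensity (ν : Measure X) (α : ℝ) (x : X) : Prop :=
  ∃ M s₀ : ℝ, 0 < s₀ ∧ ∀ s ∈ Ioc 0 s₀, ν.real (closedBall x s) ≤ M * s ^ α

lemma measure_setOf_hasFiniteUpperDensity_eq_zero [BorelSpace X] (ν : Measure X)
    [IsFiniteMeasure ν] {α : ℝ} (hα : 0 ≤ α) {E : Set X} (hE : μH[α] E = 0) :
    ν {x ∈ E | HasFiniteUpperDensity ν α x} = 0 := by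
  set A : ℕ → Set X := fun N =>
    {x ∈ E | ∀ s ∈ Ioc 0 (N + 1 : ℝ)⁻¹, ν.real (closedBall x s) ≤ (N + 1) * s ^ α}
  have hA : ∀ N, ν (A N) = 0 := fun N => by
    refine nonpos_iff_eq_zero.1 <| (measure_le_ofReal_mul_hausdorffMeasure ν hα (M := N + 1)
      (s₀ := (N + 1)⁻¹) (by positivity) (by positivity) fun x hx s hs => ?_).trans_eq
      (by rw [measure_mono_null (fun x hx => hx.1) hE, mul_zero])
    rw [← ofReal_measureReal]
    exact ENNReal.ofReal_le_ofReal (hx.2 s hs)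
  refine measure_mono_null (fun x ⟨hxE, M, s₀, hs₀, hx⟩ => ?_) (measure_iUnion_null hA)
  obtain ⟨N, hN⟩ := exists_nat_ge (max M s₀⁻¹)
  refine mem_iUnion.2 ⟨N, hxE, fun s hs => ?_⟩
  have hs₀N : (N + 1 : ℝ)⁻¹ ≤ s₀ := inv_le_of_inv_le₀ hs₀ (by linarith [le_max_right M s₀⁻¹])
  exact (hx s ⟨hs.1, hs.2.trans hs₀N⟩).trans <| mul_le_mul_of_nonneg_right
    (by linarith [le_max_left M s₀⁻¹]) (Real.rpow_nonneg hs.1.le _)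

/-- `(4/3)^α` is the doubling constant of `r ↦ r ^ α` for the ratio `3 : 9/4` of the two radii,
so such radii occur at arbitrarily small scales wherever the upper `α`-density of `ν` is
infinite. -/
def IsHeavyDoublingRadius (ν : Measure X) (α T : ℝ) (x : X) (r : ℝ) : Prop :=
  ν.real (closedBall x (3 * r)) ≤ (4 / 3) ^ α * ν.real (closedBall x (9 / 4 * r)) ∧
    T * r ^ α ≤ ν.real (closedBall x (9 / 4 * r))

lemma exists_measureReal_closedBall_geometric_le (ν : Measure X) [IsFiniteMeasure ν] {α T σ : ℝ}
    (hσ : 0 < σ) {x : X} (h : ∀ r ∈ Ioc 0 σ, ¬IsHeavyDoublingRadius ν α T x r) :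
    ∃ M, 0 ≤ M ∧ ∀ k : ℕ,
      ν.real (closedBall x (3 * ((3 / 4) ^ k * σ))) ≤ M * ((3 / 4) ^ k * σ) ^ α := by
  set M := max (ν.real univ / σ ^ α) (T * (4 / 3) ^ α)
  refine ⟨M, le_max_of_le_left (by positivity), fun k => ?_⟩
  induction k with
  | zero =>
    calc ν.real (closedBall x (3 * ((3 / 4) ^ 0 * σ))) ≤ ν.real univ :=
          measureReal_mono (subset_univ _)
      _ = ν.real univ / σ ^ α * ((3 / 4) ^ 0 * σ) ^ α := by
        rw [pow_zero, one_mul, div_mul_cancel₀ _ (Real.rpow_pos_of_pos hσ α).ne']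
      _ ≤ M * ((3 / 4) ^ 0 * σ) ^ α := by gcongr; exact le_max_left _ _
  | succ k ih =>
    set ρ := (3 / 4 : ℝ) ^ k * σ
    have hρ : 0 < ρ := by positivity
    have hρσ : ρ ≤ σ := mul_le_of_le_one_left hσ.le (pow_le_one₀ (by norm_num) (by norm_num))
    have hK : 0 < (4 / 3 : ℝ) ^ α := by positivity
    have hscale : ρ ^ α = (4 / 3) ^ α * (3 / 4 * ρ) ^ α := by
      rw [← Real.mul_rpow (by norm_num) (by positivity)]; ring_nf
    rw [show (3 / 4 : ℝ) ^ (k + 1) * σ = 3 / 4 * ρ by ring]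
    have hnot := h ρ ⟨hρ, hρσ⟩
    rw [IsHeavyDoublingRadius, show 9 / 4 * ρ = 3 * (3 / 4 * ρ) by ring, not_and_or, not_le,
      not_le] at hnot
    rcases hnot with hnot_doubling | hnot_heavy
    · refine le_of_lt (lt_of_mul_lt_mul_left ?_ hK.le)
      calc (4 / 3) ^ α * ν.real (closedBall x (3 * (3 / 4 * ρ)))
          < ν.real (closedBall x (3 * ρ)) := hnot_doubling
        _ ≤ M * ρ ^ α := ih
        _ = (4 / 3) ^ α * (M * (3 / 4 * ρ) ^ α) := by rw [hscale]; ring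
    · calc ν.real (closedBall x (3 * (3 / 4 * ρ))) ≤ T * ρ ^ α := hnot_heavy.le
        _ = T * (4 / 3) ^ α * (3 / 4 * ρ) ^ α := by rw [hscale]; ring
        _ ≤ M * (3 / 4 * ρ) ^ α := by gcongr; exact le_max_right _ _

lemma exists_isHeavyDoublingRadius (ν : Measure X) [IsFiniteMeasure ν] {α : ℝ} (hα : 0 ≤ α)
    {x : X} (hx : ¬HasFiniteUpperDensity ν α x) (T : ℝ) {σ : ℝ} (hσ : 0 < σ) :
    ∃ r ∈ Ioc 0 σ, IsHeavyDoublingRadius ν α T x r := by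
  by_contra! h
  obtain ⟨M, hM, hball⟩ := exists_measureReal_closedBall_geometric_le ν hσ h
  refine hx ⟨M, 3 * σ, by positivity, fun s hs => ?_⟩
  obtain ⟨k, hk_lt, hk_le⟩ := exists_nat_pow_near_of_lt_one (div_pos hs.1 (by positivity))
    ((div_le_one (by positivity)).2 hs.2) (by norm_num : (0 : ℝ) < 3 / 4) (by norm_num)
  rw [lt_div_iff₀ (by positivity)] at hk_lt
  rw [div_le_iff₀ (by positivity)] at hk_le
  calc ν.real (closedBall x s) ≤ ν.real (closedBall x (3 * ((3 / 4) ^ k * σ))) :=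
        measureReal_mono (closedBall_subset_closedBall (by linarith))
    _ ≤ M * ((3 / 4) ^ k * σ) ^ α := hball k
    _ ≤ M * s ^ α := by
        gcongr
        rw [pow_succ] at hk_lt
        nlinarith [pow_pos (by norm_num : (0 : ℝ) < 3 / 4) k]

lemma IsHeavyDoublingRadius.measure_closedBall_le {ν : Measure X} [IsFiniteMeasure ν] {α T : ℝ}
    {x : X} {r : ℝ} (h : IsHeavyDoublingRadius ν α T x r) :
    ν (closedBall x (3 * r)) ≤ ENNReal.ofReal ((4 / 3) ^ α) * ν (closedBall x (9 / 4 * r)) := by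
  rw [← ofReal_measureReal, ← ofReal_measureReal, ← ENNReal.ofReal_mul (by positivity)]
  exact ENNReal.ofReal_le_ofReal h.1

/-- The hypothesis of the theorem as seen through the bump `φ`, which is `1` on the ball of radius
`9/4 * r = 3/4 * (3 * r)` and vanishes off the ball of radius `3 * r`. -/
def BallExcessBound (p q : Measure X) (α β C : ℝ) : Prop :=
  ∀ (s : Finset X) (r : X → ℝ), (∀ x ∈ s, 0 < r x) →
    (s : Set X).PairwiseDisjoint (fun x => closedBall x (3 * r x)) →
    ∑ x ∈ s, p.real (closedBall x (9 / 4 * r x)) ≤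
      C * (∑ x ∈ s, r x ^ α) ^ β + ∑ x ∈ s, q.real (closedBall x (3 * r x))

lemma sum_le_measureReal_univ_of_pairwiseDisjoint [OpensMeasurableSpace X] (ν : Measure X)
    [IsFiniteMeasure ν] {s : Finset X} {r w : X → ℝ}
    (hdisj : (s : Set X).PairwiseDisjoint (fun x => closedBall x (r x)))
    (hw : ∀ x ∈ s, w x ≤ ν.real (closedBall x (r x))) :
    ∑ x ∈ s, w x ≤ ν.real univ :=
  calc ∑ x ∈ s, w x ≤ ∑ x ∈ s, ν.real (closedBall x (r x)) := Finset.sum_le_sum hw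
    _ = ν.real (⋃ x ∈ s, closedBall x (r x)) :=
      (measureReal_biUnion_finset hdisj fun _ _ => measurableSet_closedBall).symm
    _ ≤ ν.real univ := measureReal_mono (subset_univ _)

lemma BallExcessBound.tsum_measure_closedBall_le [OpensMeasurableSpace X] {p q : Measure X}
    [IsFiniteMeasure p] [IsFiniteMeasure q] {α β C T δ : ℝ} (H : BallExcessBound p q α β C)
    (hC : 0 ≤ C) (hβ : 0 ≤ β) (hT : 0 < T) (hδ : (p + q).real univ ≤ T * δ) {t : Set X}
    {r : X → ℝ} (hr : ∀ x ∈ t, 0 < r x)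
    (hdisj : t.PairwiseDisjoint fun x => closedBall x (3 * r x))
    (hheavy : ∀ x ∈ t, T * r x ^ α ≤ (p + q).real (closedBall x (9 / 4 * r x))) :
    ∑' x : t, p (closedBall x (9 / 4 * r x)) ≤
      ENNReal.ofReal (C * δ ^ β) + ∑' x : t, q (closedBall x (3 * r x)) := by
  rw [ENNReal.tsum_eq_iSup_sum]
  refine iSup_le fun F => ?_
  set s := F.map (Function.Embedding.subtype _)
  have hst : (s : Set X) ⊆ t := by
    intro x hx
    obtain ⟨y, -, rfl⟩ := Finset.mem_map.1 hx
    exact y.2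
  have hrs : ∀ x ∈ s, 0 < r x := fun x hx => hr x (hst hx)
  have hsum : ∑ x ∈ s, r x ^ α ≤ δ := by
    refine le_of_mul_le_mul_left ?_ hT
    rw [Finset.mul_sum]
    refine (sum_le_measureReal_univ_of_pairwiseDisjoint (p + q) (hdisj.subset hst)
      fun x hx => ?_).trans hδ
    exact (hheavy x (hst hx)).trans
      (measureReal_mono (closedBall_subset_closedBall (by linarith [hrs x hx])))
  have hbound := (H s r hrs (hdisj.subset hst)).trans (add_le_add_left (mul_le_mul_of_nonneg_left
    (Real.rpow_le_rpow (Finset.sum_nonneg fun x hx => Real.rpow_nonneg (hrs x hx).le _) hsum hβ)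
    hC) _)
  calc ∑ x ∈ F, p (closedBall x (9 / 4 * r x))
      = ENNReal.ofReal (∑ x ∈ s, p.real (closedBall x (9 / 4 * r x))) := by
        rw [ENNReal.ofReal_sum_of_nonneg fun _ _ => measureReal_nonneg, Finset.sum_map]
        simp [measureReal_def]
    _ ≤ ENNReal.ofReal (C * δ ^ β) + ENNReal.ofReal (∑ x ∈ s, q.real (closedBall x (3 * r x))) :=
        (ENNReal.ofReal_le_ofReal hbound).trans ENNReal.ofReal_add_le
    _ = ENNReal.ofReal (C * δ ^ β) + ∑ x ∈ F, q (closedBall x (3 * r x)) := by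
        rw [ENNReal.ofReal_sum_of_nonneg fun _ _ => measureReal_nonneg, Finset.sum_map]
        simp [measureReal_def]
    _ ≤ ENNReal.ofReal (C * δ ^ β) + ∑' x : t, q (closedBall x (3 * r x)) := by
        gcongr
        exact ENNReal.sum_le_tsum F

variable [BorelSpace X] [SecondCountableTopology X] [HasBesicovitchCovering X]

lemma exists_disjoint_heavyDoublingBalls_covering_ae (ν : Measure X) [IsFiniteMeasure ν]
    {α T : ℝ} {G U : Set X} (hU : IsOpen U) (hGU : G ⊆ U)
    (hG : ∀ x ∈ G, ∀ σ > 0, ∃ r ∈ Ioc 0 σ, IsHeavyDoublingRadius ν α T x r) :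
    ∃ (t : Set X) (r : X → ℝ), t.Countable ∧
      (∀ x ∈ t, 0 < r x ∧ IsHeavyDoublingRadius ν α T x (r x) ∧ closedBall x (3 * r x) ⊆ U) ∧
      ν (G \ ⋃ x ∈ t, closedBall x (3 * r x)) = 0 ∧
      t.PairwiseDisjoint fun x => closedBall x (3 * r x) := by
  set f : X → Set ℝ := fun x => {u | IsHeavyDoublingRadius ν α T x (u / 3) ∧ closedBall x u ⊆ U}
  have hf : ∀ x ∈ G, ∀ ε > 0, (f x ∩ Ioo 0 ε).Nonempty := by
    intro x hx ε hε
    obtain ⟨ρ, hρ, hρU⟩ := nhds_basis_closedBall.mem_iff.1 (hU.mem_nhds (hGU hx))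
    obtain ⟨r, ⟨hr, hrσ⟩, hheavy⟩ := hG x hx (min ε ρ / 4) (by positivity)
    have hrε := hrσ.trans (div_le_div_of_nonneg_right (min_le_left ε ρ) (by norm_num))
    have hrρ := hrσ.trans (div_le_div_of_nonneg_right (min_le_right ε ρ) (by norm_num))
    refine ⟨3 * r, ⟨by rwa [mul_div_cancel_left₀ _ three_ne_zero],
      (closedBall_subset_closedBall (by linarith)).trans hρU⟩, by positivity, by linarith⟩
  obtain ⟨t, u, ht, -, hu, hcover, hdisj⟩ :=
    Besicovitch.exists_disjoint_closedBall_covering_ae ν f G hf (fun _ => 1) fun _ _ => one_pos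
  have hu_eq : ∀ x, u x = 3 * (u x / 3) := fun x => by ring
  refine ⟨t, fun x => u x / 3, ht, fun x hx => ⟨by linarith [(hu x hx).2.1], (hu x hx).1.1,
    hu_eq x ▸ (hu x hx).1.2⟩, ?_, ?_⟩
  · simpa only [← hu_eq] using hcover
  · simpa only [← hu_eq] using hdisj

lemma BallExcessBound.measure_le_of_forall_exists_isHeavyDoublingRadius {p q : Measure X}
    [IsFiniteMeasure p] [IsFiniteMeasure q] {α β C T δ : ℝ} (H : BallExcessBound p q α β C)
    (hC : 0 ≤ C) (hβ : 0 ≤ β) (hT : 0 < T) (hδ : (p + q).real univ ≤ T * δ) {G U : Set X}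
    (hU : IsOpen U) (hGU : G ⊆ U)
    (hG : ∀ x ∈ G, ∀ σ > 0, ∃ r ∈ Ioc 0 σ, IsHeavyDoublingRadius (p + q) α T x r) :
    (p + q) G ≤ ENNReal.ofReal ((4 / 3) ^ α) * (ENNReal.ofReal (C * δ ^ β) + q U + q U) := by
  obtain ⟨t, r, ht, hgood, hcover, hdisj⟩ :=
    exists_disjoint_heavyDoublingBalls_covering_ae (p + q) hU hGU hG
  have hqU : ∑' x : t, q (closedBall x (3 * r x)) ≤ q U :=
    (measure_biUnion ht hdisj fun _ _ => measurableSet_closedBall).symm.trans_le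
      (measure_mono (iUnion₂_subset fun x hx => (hgood x hx).2.2))
  have hinner : ∀ x : t, closedBall (x : X) (9 / 4 * r x) ⊆ closedBall x (3 * r x) := fun x =>
    closedBall_subset_closedBall (by linarith [(hgood x x.2).1])
  calc (p + q) G ≤ (p + q) (⋃ x ∈ t, closedBall x (3 * r x)) :=
        measure_mono_ae (ae_le_set.2 hcover)
    _ ≤ ∑' x : t, (p + q) (closedBall x (3 * r x)) := measure_biUnion_le _ ht _
    _ ≤ ∑' x : t, ENNReal.ofReal ((4 / 3) ^ α) * (p + q) (closedBall x (9 / 4 * r x)) :=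
        ENNReal.tsum_le_tsum fun x => (hgood x x.2).2.1.measure_closedBall_le
    _ = ENNReal.ofReal ((4 / 3) ^ α) * (∑' x : t, p (closedBall x (9 / 4 * r x)) +
          ∑' x : t, q (closedBall x (9 / 4 * r x))) := by
        simp only [Measure.add_apply, ENNReal.tsum_mul_left, ENNReal.tsum_add]
    _ ≤ ENNReal.ofReal ((4 / 3) ^ α) * (ENNReal.ofReal (C * δ ^ β) + q U + q U) := by
        gcongr
        · exact (H.tsum_measure_closedBall_le hC hβ hT hδ (fun x hx => (hgood x hx).1) hdisj
            fun x hx => (hgood x hx).2.1.2).trans (add_le_add_right hqU _)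
        · exact (ENNReal.tsum_le_tsum fun x => measure_mono (hinner x)).trans hqU

lemma BallExcessBound.measure_eq_zero_of_forall_exists_isHeavyDoublingRadius {p q : Measure X}
    [IsFiniteMeasure p] [IsFiniteMeasure q] {α β C : ℝ} (H : BallExcessBound p q α β C)
    (hC : 0 ≤ C) (hβ : 0 < β) {G : Set X} (hqG : q G = 0)
    (hG : ∀ x ∈ G, ∀ T, ∀ σ > 0, ∃ r ∈ Ioc 0 σ, IsHeavyDoublingRadius (p + q) α T x r) :
    (p + q) G = 0 := by
  refine nonpos_iff_eq_zero.1 (ENNReal.le_of_forall_pos_le_add fun ε hε _ => ?_)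
  rw [zero_add]
  have hK : 0 < (4 / 3 : ℝ) ^ α := by positivity
  set η : ℝ := ε / (3 * (4 / 3) ^ α)
  have hη : 0 < η := by positivity
  set δ : ℝ := (η / (C + 1)) ^ β⁻¹
  have hδ : 0 < δ := by positivity
  have hCδ : C * δ ^ β ≤ η := by
    rw [Real.rpow_inv_rpow (by positivity) hβ.ne', mul_div_assoc', div_le_iff₀ (by positivity)]
    nlinarith
  set T : ℝ := ((p + q).real univ + 1) / δ
  have hTδ : (p + q).real univ ≤ T * δ := by
    rw [div_mul_cancel₀ _ hδ.ne']
    linarith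
  obtain ⟨U, hGU, hU, hqU⟩ :=
    Set.exists_isOpen_lt_of_lt G (ENNReal.ofReal η) (by rw [hqG]; exact ENNReal.ofReal_pos.2 hη)
  calc (p + q) G ≤ ENNReal.ofReal ((4 / 3) ^ α) * (ENNReal.ofReal (C * δ ^ β) + q U + q U) :=
        H.measure_le_of_forall_exists_isHeavyDoublingRadius hC hβ.le (by positivity) hTδ hU hGU
          fun x hx σ hσ => hG x hx T σ hσ
    _ ≤ ENNReal.ofReal ((4 / 3) ^ α) *
          (ENNReal.ofReal η + ENNReal.ofReal η + ENNReal.ofReal η) := by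
        gcongr
    _ = ε := by
        rw [← ENNReal.ofReal_add hη.le hη.le, ← ENNReal.ofReal_add (by positivity) hη.le,
          ← ENNReal.ofReal_mul hK.le, ← ENNReal.ofReal_coe_nnreal]
        congr 1
        simp only [η]
        field_simp
        ring

lemma BallExcessBound.measure_eq_zero {p q : Measure X} [IsFiniteMeasure p] [IsFiniteMeasure q]
    {α β C : ℝ} (H : BallExcessBound p q α β C) (hα : 0 ≤ α) (hβ : 0 < β) (hC : 0 ≤ C)
    {E : Set X} (hE : μH[α] E = 0) (hqE : q E = 0) : p E = 0 := by
  set G := {x ∈ E | ¬HasFiniteUpperDensity (p + q) α x}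
  have hG : (p + q) G = 0 :=
    H.measure_eq_zero_of_forall_exists_isHeavyDoublingRadius hC hβ
      (measure_mono_null (fun x hx => hx.1) hqE)
      fun x hx T σ hσ => exists_isHeavyDoublingRadius (p + q) hα hx.2 T hσ
  have hEG : E ⊆ G ∪ {x ∈ E | HasFiniteUpperDensity (p + q) α x} := fun x hx => by
    by_cases h : HasFiniteUpperDensity (p + q) α x
    exacts [Or.inr ⟨hx, h⟩, Or.inl ⟨hx, h⟩]
  have hunion := measure_union_null hG (measure_setOf_hasFiniteUpperDensity_eq_zero (p + q) hα hE)
  rw [Measure.add_apply] at hunion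
  exact measure_mono_null hEG (add_eq_zero.1 hunion).1

lemma BallExcessBound.measure_eq_zero_of_mutuallySingular {p q : Measure X} [IsFiniteMeasure p]
    [IsFiniteMeasure q] {α β C : ℝ} (H : BallExcessBound p q α β C) (hpq : p ⟂ₘ q) (hα : 0 ≤ α)
    (hβ : 0 < β) (hC : 0 ≤ C) {E : Set X} (hE : μH[α] E = 0) : p E = 0 := by
  obtain ⟨S, -, hpS, hqS⟩ := hpq
  rw [← inter_union_sdiff E S]
  exact measure_union_null (measure_mono_null inter_subset_right hpS)
    (H.measure_eq_zero hα hβ hC (measure_mono_null sdiff_subset hE)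
      (measure_mono_null (fun x hx => hx.2) hqS))

end Density

lemma sum_abs_integral_sub_le_of_sintegral {E : Type*} [NormedAddCommGroup E] [NormedSpace ℝ E]
    [MeasurableSpace E] {μ : SignedMeasure E} {φ : E → ℝ} {α β C : ℝ}
    (hμ : ∀ (N : ℕ) (x : Fin N → E) (r : Fin N → ℝ), (∀ j, 0 < r j) →
      (∀ j k, j ≠ k → Disjoint (ball (x j) (3 * r j)) (ball (x k) (3 * r k))) →
      ∑ j : Fin N, |sintegral μ (fun y => φ ((3 * r j)⁻¹ • (x j + y)))|
        ≤ C * (∑ j : Fin N, r j ^ α) ^ β)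
    (s : Finset E) (r : E → ℝ) (hr : ∀ z ∈ s, 0 < r z)
    (hdisj : (s : Set E).PairwiseDisjoint fun z => closedBall z (3 * r z)) :
    ∑ z ∈ s, |(∫ y, φ ((3 * r z)⁻¹ • (y - z)) ∂μ.toJordanDecomposition.posPart) -
      ∫ y, φ ((3 * r z)⁻¹ • (y - z)) ∂μ.toJordanDecomposition.negPart| ≤
      C * (∑ z ∈ s, r z ^ α) ^ β := by
  set e : Fin s.card ≃ s := s.equivFin.symm
  have hneg_disj : ∀ j k, j ≠ k →
      Disjoint (ball (-(e j : E)) (3 * r (e j))) (ball (-(e k : E)) (3 * r (e k))) := by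
    intro j k hjk
    rw [← neg_ball, ← neg_ball]
    exact ((hdisj (e j).2 (e k).2 (Subtype.coe_ne_coe.2 (e.injective.ne hjk))).mono
      ball_subset_closedBall ball_subset_closedBall).preimage _
  have := hμ s.card (fun j => -(e j : E)) (fun j => r (e j)) (fun j => hr _ (e j).2) hneg_disj
  simp only [sintegral, neg_add_eq_sub] at this
  rwa [← Finset.sum_coe_sort s, ← Finset.sum_coe_sort s, ← e.sum_comp, ← e.sum_comp]

lemma BallExcessBound.of_sum_abs_integral_sub_le {E : Type*} [NormedAddCommGroup E]
    [NormedSpace ℝ E] [MeasurableSpace E] [BorelSpace E] {ν₁ ν₂ : Measure E} [IsFiniteMeasure ν₁]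
    [IsFiniteMeasure ν₂] {φ : E → ℝ} (hφ : Measurable φ) (hφ0 : ∀ x, 0 ≤ φ x)
    (hφ1 : ∀ x, φ x ≤ 1) (hφone : ∀ x : E, ‖x‖ ≤ 3 / 4 → φ x = 1)
    (hφsupp : tsupport φ ⊆ closedBall 0 1) {α β C : ℝ}
    (hI : ∀ (s : Finset E) (r : E → ℝ), (∀ z ∈ s, 0 < r z) →
      (s : Set E).PairwiseDisjoint (fun z => closedBall z (3 * r z)) →
      ∑ z ∈ s, |(∫ y, φ ((3 * r z)⁻¹ • (y - z)) ∂ν₁) - ∫ y, φ ((3 * r z)⁻¹ • (y - z)) ∂ν₂| ≤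
        C * (∑ z ∈ s, r z ^ α) ^ β) :
    BallExcessBound ν₁ ν₂ α β C := by
  intro s r hr hdisj
  calc ∑ z ∈ s, ν₁.real (closedBall z (9 / 4 * r z))
      ≤ ∑ z ∈ s, (|(∫ y, φ ((3 * r z)⁻¹ • (y - z)) ∂ν₁) - ∫ y, φ ((3 * r z)⁻¹ • (y - z)) ∂ν₂| +
          ν₂.real (closedBall z (3 * r z))) := Finset.sum_le_sum fun z hz => by
        have hR : 0 < 3 * r z := by linarith [hr z hz]
        have h₁ := measureReal_closedBall_le_integral_bump ν₁ hφ hφ0 hφ1 hφone hR z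
        have h₂ := integral_bump_le_measureReal_closedBall ν₂ hφ hφ0 hφ1 hφsupp hR z
        rw [show 3 / 4 * (3 * r z) = 9 / 4 * r z by ring] at h₁
        linarith [le_abs_self ((∫ y, φ ((3 * r z)⁻¹ • (y - z)) ∂ν₁) -
          ∫ y, φ ((3 * r z)⁻¹ • (y - z)) ∂ν₂)]
    _ ≤ C * (∑ z ∈ s, r z ^ α) ^ β + ∑ z ∈ s, ν₂.real (closedBall z (3 * r z)) := by
        rw [Finset.sum_add_distrib]
        exact add_le_add_left (hI s r hr hdisj) _

theorem frostman_generalization_general (n : ℕ)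
    (φ : EuclideanSpace ℝ (Fin n) → ℝ)
    (hφsmooth : ContDiff ℝ (⊤ : ℕ∞) φ)
    (hφsupp : tsupport φ ⊆ Metric.closedBall 0 1)
    (hφpos : ∀ x, 0 ≤ φ x)
    (hφmono : ∀ x y : EuclideanSpace ℝ (Fin n), ‖x‖ ≤ ‖y‖ → φ y ≤ φ x)
    (hφone : ∀ x : EuclideanSpace ℝ (Fin n), ‖x‖ ≤ 3 / 4 → φ x = 1)
    (α β : ℝ) (hα : 0 < α) (hβ : 0 < β)
    (μ : SignedMeasure (EuclideanSpace ℝ (Fin n)))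
    (C : ℝ)
    (hμ : ∀ (N : ℕ) (x : Fin N → EuclideanSpace ℝ (Fin n)) (r : Fin N → ℝ),
      (∀ j, 0 < r j) →
      (∀ j k, j ≠ k →
        Disjoint (Metric.ball (x j) (3 * r j)) (Metric.ball (x k) (3 * r k))) →
      ∑ j : Fin N, |sintegral μ (fun y => φ ((3 * r j)⁻¹ • (x j + y)))|
        ≤ C * (∑ j : Fin N, r j ^ α) ^ β)
    (F : Set (EuclideanSpace ℝ (Fin n)))
    (hdim : dimH F < ENNReal.ofReal α) :
    μ F = 0 := by
  have hφ : Measurable φ := hφsmooth.continuous.measurable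
  have hφ1 : ∀ x, φ x ≤ 1 := fun x => (hφmono 0 x (by simp)).trans_eq (hφone 0 (by norm_num))
  have hμ₀ := fun N x r hr hd => (hμ N x r hr hd).trans <| mul_le_mul_of_nonneg_right
    (le_max_left C 0)
    (Real.rpow_nonneg (Finset.sum_nonneg fun j _ => Real.rpow_nonneg (hr j).le _) _)
  set p := μ.toJordanDecomposition.posPart
  set q := μ.toJordanDecomposition.negPart
  have hpq : BallExcessBound p q α β (max C 0) :=
    .of_sum_abs_integral_sub_le hφ hφpos hφ1 hφone hφsupp (sum_abs_integral_sub_le_of_sintegral hμ₀)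
  have hqp : BallExcessBound q p α β (max C 0) :=
    .of_sum_abs_integral_sub_le hφ hφpos hφ1 hφone hφsupp fun s r hr hd => by
      simpa only [abs_sub_comm] using sum_abs_integral_sub_le_of_sintegral hμ₀ s r hr hd
  have hF : μH[α] F = 0 := by
    simpa [Real.coe_toNNReal _ hα.le] using hausdorffMeasure_of_dimH_lt (d := α.toNNReal) hdim
  refine μ.null_of_totalVariation_zero ?_
  have hj := μ.toJordanDecomposition.mutuallySingular
  rw [SignedMeasure.totalVariation, Measure.add_apply,
    hpq.measure_eq_zero_of_mutuallySingular hj hα.le hβ (le_max_right C 0) hF,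
    hqp.measure_eq_zero_of_mutuallySingular hj.symm hα.le hβ (le_max_right C 0) hF, add_zero]

/-- **A generalization of Frostman's lemma to signed measures.** Let
`φ ∈ C_c^∞(ℝⁿ)` be a nonnegative radial function supported in the unit ball,
nonincreasing in the radius, with `φ = 1` on the ball of radius `3/4`. If a finite
signed Borel measure `μ` satisfies
`∑_j |∫ φ((x_j + y)/(3 r_j)) dμ(y)| ≤ C (∑_j r_j^α)^β`
for every finite collection of balls `B_{r_j}(x_j)` whose triples `B_{3 r_j}(x_j)`
are pairwise disjoint, then `dim μ ≥ α`: `μ F = 0` for every Borel `F` with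
`dimH F < α`. -/
theorem frostman_generalization (n : ℕ)
    (φ : EuclideanSpace ℝ (Fin n) → ℝ)
    (hφsmooth : ContDiff ℝ (⊤ : ℕ∞) φ)
    (hφsupp : tsupport φ ⊆ Metric.closedBall 0 1)
    (hφpos : ∀ x, 0 ≤ φ x)
    (hφradial : ∀ x y : EuclideanSpace ℝ (Fin n), ‖x‖ = ‖y‖ → φ x = φ y)
    (hφmono : ∀ x y : EuclideanSpace ℝ (Fin n), ‖x‖ ≤ ‖y‖ → φ y ≤ φ x)
    (hφone : ∀ x : EuclideanSpace ℝ (Fin n), ‖x‖ ≤ 3 / 4 → φ x = 1)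
    (α β : ℝ) (hα : 0 < α) (hβ : 0 < β)
    (μ : SignedMeasure (EuclideanSpace ℝ (Fin n)))
    (C : ℝ)
    (hμ : ∀ (N : ℕ) (x : Fin N → EuclideanSpace ℝ (Fin n)) (r : Fin N → ℝ),
      (∀ j, 0 < r j) →
      (∀ j k, j ≠ k →
        Disjoint (Metric.ball (x j) (3 * r j)) (Metric.ball (x k) (3 * r k))) →
      ∑ j : Fin N, |sintegral μ (fun y => φ ((3 * r j)⁻¹ • (x j + y)))|
        ≤ C * (∑ j : Fin N, r j ^ α) ^ β)
    (F : Set (EuclideanSpace ℝ (Fin n))) (hF : MeasurableSet F)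
    (hdim : dimH F < ENNReal.ofReal α) :
    μ F = 0 :=
  frostman_generalization_general n φ hφsmooth hφsupp hφpos hφmono hφone α β hα hβ μ C hμ F hdim
end

section
/- Let μ be a finite signed Borel measure on ℝ^k × ℝ^l and let α > 0. Suppose that μ(I × A) = 0 for every closed rectangular parallelepiped I ⊂ ℝ^k and every Borel set A ⊂ ℝ^l with Hausdorff dimension dimH A < α. Then μ(F) = 0 for every Borel set F ⊂ ℝ^k × ℝ^l with dimH F < α; that is, dim μ ≥ α. -/
open MeasureTheory

/-- Projection of `ℝ^{k+l}` onto the first `k` coordinates. -/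
noncomputable def projFst (k l : ℕ) (x : EuclideanSpace ℝ (Fin (k + l))) :
    EuclideanSpace ℝ (Fin k) :=
  WithLp.toLp 2 (fun i => x (Fin.castAdd l i))

/-- Projection of `ℝ^{k+l}` onto the last `l` coordinates. -/
noncomputable def projSnd (k l : ℕ) (x : EuclideanSpace ℝ (Fin (k + l))) :
    EuclideanSpace ℝ (Fin l) :=
  WithLp.toLp 2 (fun j => x (Fin.natAdd k j))

/-!
The projection onto the last `l` coordinates is Lipschitz, so it maps `F` into a Borel set `B`
with `dimH B < α`. The restriction of `μ` to the cylinder over `B` vanishes on every `I × A`,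
since `(I × A) ∩ (ℝ^k × B) = I × (A ∩ B)`. These sets form a π-system generating the Borel
σ-algebra, so the restriction is zero, and `μ F` is its value at `F ⊆ ℝ^k × B`.
-/

open Set MeasurableSpace

namespace MeasureTheory.VectorMeasure

theorem eq_zero_of_generateFrom {X M : Type*} [AddCommGroup M] [TopologicalSpace M]
    [T2Space M] {mX : MeasurableSpace X} {v : VectorMeasure X M}
    {C : Set (Set X)} (hA : mX = generateFrom C) (hC : IsPiSystem C)
    {u : ℕ → Set X} (hu : Monotone u) (huC : ∀ n, u n ∈ C) (hU : ⋃ n, u n = univ)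
    (hv : ∀ s ∈ C, v s = 0) : v = 0 := by
  have hCm : ∀ s ∈ C, MeasurableSet s := fun s hs => hA ▸ measurableSet_generateFrom hs
  have huniv : v univ = 0 := by
    have hlim := tendsto_vectorMeasure_iUnion_atTop_nat (v := v) hu fun n => hCm _ (huC n)
    rw [hU] at hlim
    refine tendsto_nhds_unique hlim ?_
    simp only [hv _ (huC _)]
    exact tendsto_const_nhds
  exact ext_of_generateFrom C (by simpa using hv) hA hC (by simpa using huniv)

end MeasureTheory.VectorMeasure

theorem exists_measurableSet_superset_dimH_lt {X : Type*} [EMetricSpace X] [MeasurableSpace X]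
    [BorelSpace X] {s : Set X} {d : ENNReal} (hs : dimH s < d) :
    ∃ t, s ⊆ t ∧ MeasurableSet t ∧ dimH t < d := by
  obtain ⟨r, hsr, hrd⟩ := exists_between hs
  lift r to NNReal using hrd.ne_top
  refine ⟨toMeasurable μH[r] s, subset_toMeasurable _ _, measurableSet_toMeasurable _ _,
    (dimH_le_of_hausdorffMeasure_ne_top ?_).trans_lt hrd⟩
  rw [measure_toMeasurable, hausdorffMeasure_of_dimH_lt hsr]
  exact ENNReal.zero_ne_top

theorem isPiSystem_range_Icc (α : Type*) [Lattice α] :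
    IsPiSystem (range fun p : α × α => Icc p.1 p.2) := by
  rintro _ ⟨p, rfl⟩ _ ⟨q, rfl⟩ -
  exact ⟨(p.1 ⊔ q.1, p.2 ⊓ q.2), Icc_inter_Icc.symm⟩

theorem iUnion_Icc_neg_natCast_pi (ι : Type*) [Fintype ι] :
    ⋃ n : ℕ, Icc (-(n : ι → ℝ)) n = univ :=
  eq_univ_of_forall fun x => mem_iUnion.2 ⟨⌈‖x‖⌉₊, forall_and.1 fun i => by
    simpa using abs_le.1 ((norm_le_pi_norm x i).trans (Nat.le_ceil _))⟩

theorem measurableSpace_pi_eq_generateFrom_Icc (ι : Type*) [Finite ι] :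
    (MeasurableSpace.pi : MeasurableSpace (ι → ℝ)) =
      generateFrom (range fun p : (ι → ℝ) × (ι → ℝ) => Icc p.1 p.2) := by
  refine le_antisymm ?_ (generateFrom_le ?_)
  · have hspan : IsCountablySpanning {S : Set ℝ | ∃ a b, a ≤ b ∧ Icc a b = S} :=
      ⟨fun n => Icc (-n) n, fun n => ⟨_, _, by simp, rfl⟩,
        eq_univ_of_forall fun x => mem_iUnion.2 ⟨⌈|x|⌉₊, abs_le.1 (Nat.le_ceil _)⟩⟩
    rw [← generateFrom_eq_pi (fun _ => (borel_eq_generateFrom_Icc ℝ).symm.trans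
      BorelSpace.measurable_eq.symm) fun _ => hspan]
    refine generateFrom_mono ?_
    rintro _ ⟨S, hS, rfl⟩
    choose a b _ hab using fun i => hS i (mem_univ i)
    exact ⟨(a, b), by simp only [← pi_univ_Icc, hab]⟩
  · rintro _ ⟨p, rfl⟩
    exact measurableSet_Icc

theorem lipschitzWith_one_projSnd (k l : ℕ) : LipschitzWith 1 (projSnd k l) := by
  refine LipschitzWith.of_dist_le_mul fun x y => ?_
  rw [NNReal.coe_one, one_mul, EuclideanSpace.dist_eq, EuclideanSpace.dist_eq, Fin.sum_univ_add]
  exact Real.sqrt_le_sqrt (le_add_of_nonneg_left (Finset.sum_nonneg fun i _ => sq_nonneg _))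

-- The first factor carries the product order, so that the boxes `I` are the intervals `Icc a b`.
noncomputable def splitEquiv (k l : ℕ) :
    EuclideanSpace ℝ (Fin (k + l)) ≃L[ℝ] (Fin k → ℝ) × EuclideanSpace ℝ (Fin l) :=
  LinearEquiv.toContinuousLinearEquiv
  { toFun x := (fun i => x (Fin.castAdd l i), projSnd k l x)
    invFun p := WithLp.toLp 2 (Fin.append p.1 p.2.ofLp)
    map_add' _ _ := rfl
    map_smul' _ _ := rfl
    left_inv x := by ext i; exact congrFun Fin.append_castAdd_natAdd i
    right_inv p := by ext i <;> simp [projSnd] }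

@[simp]
theorem splitEquiv_apply (k l : ℕ) (x : EuclideanSpace ℝ (Fin (k + l))) :
    splitEquiv k l x = (fun i => x (Fin.castAdd l i), projSnd k l x) :=
  rfl

theorem setOf_projFst_mem_Icc_projSnd_mem (k l : ℕ) (a b : Fin k → ℝ)
    (A : Set (EuclideanSpace ℝ (Fin l))) :
    {x | (∀ i, a i ≤ projFst k l x i ∧ projFst k l x i ≤ b i) ∧ projSnd k l x ∈ A} =
      splitEquiv k l ⁻¹' (Icc a b ×ˢ A) := by
  ext x
  simp [projFst, Pi.le_def, forall_and]

theorem measurableSpace_eq_generateFrom_preimage_splitEquiv (k l : ℕ) :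
    (inferInstance : MeasurableSpace (EuclideanSpace ℝ (Fin (k + l)))) =
      generateFrom ((splitEquiv k l ⁻¹' ·) ''
        image2 (· ×ˢ ·) (range fun p : (Fin k → ℝ) × (Fin k → ℝ) => Icc p.1 p.2)
          {A : Set (EuclideanSpace ℝ (Fin l)) | MeasurableSet A}) := by
  have hspan : IsCountablySpanning (range fun p : (Fin k → ℝ) × (Fin k → ℝ) => Icc p.1 p.2) :=
    ⟨fun n => Icc (-n) n, fun n => ⟨(-n, n), rfl⟩, iUnion_Icc_neg_natCast_pi (Fin k)⟩
  rw [← comap_generateFrom, ← generateFrom_prod_eq hspan isCountablySpanning_measurableSet,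
    ← measurableSpace_pi_eq_generateFrom_Icc, generateFrom_measurableSet]
  exact (splitEquiv k l).toHomeomorph.toMeasurableEquiv.measurableEmbedding.comap_eq.symm

theorem eq_zero_of_forall_preimage_splitEquiv_Icc_prod {M : Type*} [AddCommGroup M]
    [TopologicalSpace M] [T2Space M] {k l : ℕ}
    {v : VectorMeasure (EuclideanSpace ℝ (Fin (k + l))) M}
    (hv : ∀ a b A, MeasurableSet A → v (splitEquiv k l ⁻¹' (Icc a b ×ˢ A)) = 0) : v = 0 := by
  refine VectorMeasure.eq_zero_of_generateFrom
    (measurableSpace_eq_generateFrom_preimage_splitEquiv k l)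
    (((isPiSystem_range_Icc _).prod isPiSystem_measurableSet).comap _)
    (u := fun n : ℕ => splitEquiv k l ⁻¹' (Icc (-(n : Fin k → ℝ)) n ×ˢ univ)) ?_
    (fun n => ⟨_, mem_image2_of_mem (mem_range_self (-(n : Fin k → ℝ), (n : Fin k → ℝ)))
      (mem_ofPred.2 .univ), rfl⟩) ?_ ?_
  · exact fun m n hmn => preimage_mono <| prod_mono
      (Icc_subset_Icc (neg_le_neg (Nat.mono_cast hmn)) (Nat.mono_cast hmn)) le_rfl
  · rw [← preimage_iUnion, ← iUnion_prod_const, iUnion_Icc_neg_natCast_pi, univ_prod_univ,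
      preimage_univ]
  · rintro _ ⟨_, ⟨_, ⟨p, rfl⟩, A, hA, rfl⟩, rfl⟩
    exact hv p.1 p.2 A hA

theorem dim_ge_of_vanishing_on_products_general (k l : ℕ) (α : ℝ)
    (μ : SignedMeasure (EuclideanSpace ℝ (Fin (k + l))))
    (hμ : ∀ (a b : Fin k → ℝ) (A : Set (EuclideanSpace ℝ (Fin l))),
      MeasurableSet A → dimH A < ENNReal.ofReal α →
      μ {x : EuclideanSpace ℝ (Fin (k + l)) |
          (∀ i : Fin k, a i ≤ projFst k l x i ∧ projFst k l x i ≤ b i) ∧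
          projSnd k l x ∈ A} = 0)
    (F : Set (EuclideanSpace ℝ (Fin (k + l)))) (hF : MeasurableSet F)
    (hdim : dimH F < ENNReal.ofReal α) :
    μ F = 0 := by
  obtain ⟨B, hFB, hB, hBdim⟩ := exists_measurableSet_superset_dimH_lt
    (((lipschitzWith_one_projSnd k l).dimH_image_le F).trans_lt hdim)
  have hT : MeasurableSet (projSnd k l ⁻¹' B) :=
    (lipschitzWith_one_projSnd k l).continuous.measurable hB
  have hrestrict : μ.restrict (projSnd k l ⁻¹' B) = 0 := by
    refine eq_zero_of_forall_preimage_splitEquiv_Icc_prod fun a b A hA => ?_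
    have hprod : splitEquiv k l ⁻¹' (Icc a b ×ˢ A) ∩ projSnd k l ⁻¹' B =
        splitEquiv k l ⁻¹' (Icc a b ×ˢ (A ∩ B)) := by
      ext x
      simp [and_assoc]
    rw [VectorMeasure.restrict_apply _ hT
      ((splitEquiv k l).continuous.measurable (measurableSet_Icc.prod hA)), hprod,
      ← setOf_projFst_mem_Icc_projSnd_mem]
    exact hμ a b (A ∩ B) (hA.inter hB) ((dimH_mono inter_subset_right).trans_lt hBdim)
  calc μ F = μ.restrict (projSnd k l ⁻¹' B) F := by
        rw [VectorMeasure.restrict_apply _ hT hF,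
          inter_eq_left.2 (image_subset_iff.1 hFB)]
    _ = 0 := by rw [hrestrict]; rfl

/-- **Slicing lemma.** Let `μ` be a finite signed Borel measure on `ℝ^{k+l}` and `α > 0`.
If `μ(I × A) = 0` for every closed rectangular parallelepiped `I ⊂ ℝ^k` and every Borel
set `A ⊂ ℝ^l` of Hausdorff dimension `< α`, then `μ F = 0` for every Borel set
`F ⊂ ℝ^{k+l}` with `dimH F < α`, i.e. `dim μ ≥ α`. -/
theorem dim_ge_of_vanishing_on_products (k l : ℕ) (α : ℝ) (hα : 0 < α)
    (μ : SignedMeasure (EuclideanSpace ℝ (Fin (k + l))))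
    (hμ : ∀ (a b : Fin k → ℝ) (A : Set (EuclideanSpace ℝ (Fin l))),
      MeasurableSet A → dimH A < ENNReal.ofReal α →
      μ {x : EuclideanSpace ℝ (Fin (k + l)) |
          (∀ i : Fin k, a i ≤ projFst k l x i ∧ projFst k l x i ≤ b i) ∧
          projSnd k l x ∈ A} = 0)
    (F : Set (EuclideanSpace ℝ (Fin (k + l)))) (hF : MeasurableSet F)
    (hdim : dimH F < ENNReal.ofReal α) :
    μ F = 0 :=
  dim_ge_of_vanishing_on_products_general k l α μ hμ F hF hdim
end

section
/- Let μ be a finite signed Borel measure on ℝⁿ with Hahn decomposition sets A_+ and A_− and positive part μ_+. Define P_+ = { x ∈ A_+ : there exists δ(x) > 0 such that for all r < δ(x), μ_+(B_r(x)) ≤ 10 μ(B_r(x)) }. Then μ(P_+) = μ(A_+). -/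
/-!
Write `μ = μ₊ - μ₋` with `μ₊ ⟂ μ₋`. Since `A₊` is positive, `μ₋(A₊) = 0`, and the condition
`μ₊(B) ≤ 10 μ(B)` on a ball `B` says `μ₋(B) ≤ (9/10) μ₊(B)`. By the Besicovitch differentiation
theorem, `μ₋(B̄_r(x)) / μ₊(B̄_r(x)) → dμ₋/dμ₊ (x) = 0` for `μ₊`-a.e. `x`, so `μ₊`-almost every
point is good; hence `A₊ \ P₊` is null for both `μ₊` and `μ₋`, and so for `μ`. Measurability of
`P₊` comes from lower semicontinuity of `x ↦ ν(B_r(x))` and left continuity in `r`, which reduce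
the condition to rational radii.
-/

open MeasureTheory Metric Filter Set Topology
open scoped ENNReal NNReal

section BallMeasure

variable {α : Type*} [PseudoMetricSpace α]

theorem Metric.ball_eq_iUnion_ball_rat (x : α) (r : ℝ) :
    ball x r = ⋃ q : {q : ℚ // (q : ℝ) < r}, ball x (q : ℝ) := by
  ext y
  simp only [mem_ball, mem_iUnion, Subtype.exists, exists_prop]
  constructor
  · intro h
    obtain ⟨q, hyq, hqr⟩ := exists_rat_btwn h
    exact ⟨q, hqr, hyq⟩
  · rintro ⟨q, hqr, hyq⟩
    exact hyq.trans hqr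

variable [MeasurableSpace α]

theorem MeasureTheory.measure_ball_eq_iSup_rat (ν : Measure α) (x : α) (r : ℝ) :
    ν (ball x r) = ⨆ q : {q : ℚ // (q : ℝ) < r}, ν (ball x (q : ℝ)) := by
  rw [ball_eq_iUnion_ball_rat]
  exact (Monotone.directed_le fun q q' h => ball_subset_ball (by exact_mod_cast h)).measure_iUnion

theorem MeasureTheory.measure_ball_le_of_forall_rat {ν : Measure α} {x : α} {r : ℝ} {C : ℝ≥0∞}
    (h : ∀ q : ℚ, 0 < (q : ℝ) → (q : ℝ) < r → ν (ball x q) ≤ C) : ν (ball x r) ≤ C := by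
  rw [measure_ball_eq_iSup_rat]
  refine iSup_le fun q => ?_
  rcases le_or_gt (q : ℝ) 0 with hq | hq
  · simp [ball_eq_empty.2 hq]
  · exact h q hq q.2

theorem MeasureTheory.lowerSemicontinuous_measure_ball (ν : Measure α) (r : ℝ) :
    LowerSemicontinuous fun x => ν (ball x r) := by
  intro x c (hc : c < ν (ball x r))
  rw [measure_ball_eq_iSup_rat, lt_iSup_iff] at hc
  obtain ⟨q, hq⟩ := hc
  filter_upwards [ball_mem_nhds x (sub_pos.2 q.2)] with y hy
  refine hq.trans_le (measure_mono (ball_subset_ball' ?_))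
  rw [mem_ball, dist_comm] at hy
  linarith

theorem MeasureTheory.measurableSet_setOf_eventually_measure_ball_le [OpensMeasurableSpace α]
    (ν ρ : Measure α) (c : ℝ≥0∞) :
    MeasurableSet {x | ∀ᶠ r in 𝓝[>] (0 : ℝ), ν (ball x r) ≤ c * ρ (ball x r)} := by
  have hrat : {x | ∀ᶠ r in 𝓝[>] (0 : ℝ), ν (ball x r) ≤ c * ρ (ball x r)} =
      ⋃ n : ℕ, ⋂ q : ℚ, ⋂ (_ : 0 < (q : ℝ) ∧ (q : ℝ) < 1 / (n + 1)),
        {x | ν (ball x q) ≤ c * ρ (ball x q)} := by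
    ext x
    simp only [mem_ofPred_eq, mem_iUnion, mem_iInter, (nhdsGT_basis (0 : ℝ)).eventually_iff,
      mem_Ioo]
    constructor
    · rintro ⟨δ, hδ, hball⟩
      obtain ⟨n, hn⟩ := exists_nat_one_div_lt hδ
      exact ⟨n, fun q hq => hball ⟨hq.1, hq.2.trans hn⟩⟩
    · rintro ⟨n, hball⟩
      refine ⟨1 / (n + 1), Nat.one_div_pos_of_nat, fun r hr => ?_⟩
      refine measure_ball_le_of_forall_rat fun q hq hqr => ?_
      calc ν (ball x q) ≤ c * ρ (ball x q) := hball q ⟨hq, hqr.trans hr.2⟩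
        _ ≤ c * ρ (ball x r) := by gcongr
  rw [hrat]
  refine .iUnion fun n => .iInter fun q => .iInter fun _ => measurableSet_le ?_ ?_
  · exact (lowerSemicontinuous_measure_ball ν _).measurable
  · exact (lowerSemicontinuous_measure_ball ρ _).measurable.const_mul c

end BallMeasure

section Besicovitch

variable {β : Type*} [MetricSpace β] [MeasurableSpace β] [BorelSpace β]
  [SecondCountableTopology β] [HasBesicovitchCovering β]
  {ν ρ : Measure β} [IsLocallyFiniteMeasure ν] [IsLocallyFiniteMeasure ρ]

theorem MeasureTheory.Measure.MutuallySingular.ae_eventually_measure_closedBall_le_mul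
    (h : ν ⟂ₘ ρ) {c : ℝ≥0} (hc : 0 < c) :
    ∀ᵐ x ∂ρ, ∀ᶠ r in 𝓝[>] (0 : ℝ), ν (closedBall x r) ≤ c * ρ (closedBall x r) := by
  filter_upwards [Besicovitch.ae_tendsto_rnDeriv ν ρ, (Measure.rnDeriv_eq_zero ν ρ).2 h]
    with x hx hzero
  rw [hzero, Pi.zero_apply] at hx
  filter_upwards [hx.eventually_lt_const (ENNReal.coe_pos.2 hc)] with r hr
  exact (ENNReal.div_le_iff_le_mul (.inr ENNReal.coe_ne_top)
    (.inr (ENNReal.coe_ne_zero.2 hc.ne'))).1 hr.le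

theorem MeasureTheory.Measure.MutuallySingular.ae_eventually_measure_ball_le_mul
    (h : ν ⟂ₘ ρ) {c : ℝ≥0} (hc : 0 < c) :
    ∀ᵐ x ∂ρ, ∀ᶠ r in 𝓝[>] (0 : ℝ), ν (ball x r) ≤ c * ρ (ball x r) := by
  filter_upwards [h.ae_eventually_measure_closedBall_le_mul hc] with x hx
  obtain ⟨ε, hε, hclosed⟩ := (nhdsGT_basis (0 : ℝ)).eventually_iff.1 hx
  filter_upwards [Ioo_mem_nhdsGT hε] with r hr
  refine measure_ball_le_of_forall_rat fun q hq hqr => ?_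
  calc ν (ball x q) ≤ ν (closedBall x q) := measure_mono ball_subset_closedBall
    _ ≤ c * ρ (closedBall x q) := hclosed ⟨hq, hqr.trans hr.2⟩
    _ ≤ c * ρ (ball x r) := by gcongr; exact closedBall_subset_ball hqr

end Besicovitch

namespace MeasureTheory.SignedMeasure

variable {α : Type*} [MeasurableSpace α] {s : SignedMeasure α}

theorem negPart_eq_zero_of_zero_le_restrict {A : Set α} (hA : MeasurableSet A)
    (hpos : 0 ≤[A] s) : s.toJordanDecomposition.negPart A = 0 := by
  obtain ⟨i, hi, -, hineg, -, hneg⟩ := s.toJordanDecomposition_spec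
  have hzero : s (iᶜ ∩ A) = 0 := le_antisymm
    (VectorMeasure.nonpos_of_restrict_le_zero _
      (VectorMeasure.restrict_le_zero_subset _ hi.compl inter_subset_left hineg))
    (VectorMeasure.nonneg_of_zero_le_restrict _
      (VectorMeasure.zero_le_restrict_subset _ hA inter_subset_right hpos))
  rw [← measureReal_eq_zero_iff, hneg, toMeasureOfLEZero_real_apply _ hineg hi.compl hA, hzero,
    neg_zero]

theorem toReal_posPart_le_ten_mul_iff {B : Set α} (hB : MeasurableSet B) :
    (s.toJordanDecomposition.posPart B).toReal ≤ 10 * s B ↔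
      s.toJordanDecomposition.negPart B ≤ ((9 / 10 : ℝ≥0) : ℝ≥0∞) *
        s.toJordanDecomposition.posPart B := by
  rw [s.apply_eq_posPart_real_sub_negPart_real hB,
    ← ENNReal.toReal_le_toReal (measure_ne_top _ _) (by finiteness), ENNReal.toReal_mul,
    ENNReal.coe_toReal]
  simp only [measureReal_def]
  push_cast
  constructor <;> intro <;> linarith

end MeasureTheory.SignedMeasure

theorem measure_of_good_points_eq_general (n : ℕ)
    (μ : SignedMeasure (EuclideanSpace ℝ (Fin n)))
    (Aplus : Set (EuclideanSpace ℝ (Fin n))) (hAplus : MeasurableSet Aplus)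
    (hpos : 0 ≤[Aplus] μ) :
    μ {x : EuclideanSpace ℝ (Fin n) | x ∈ Aplus ∧ ∃ δ : ℝ, 0 < δ ∧
        ∀ r : ℝ, 0 < r → r < δ →
          (μ.toJordanDecomposition.posPart (Metric.ball x r)).toReal
            ≤ 10 * μ (Metric.ball x r)}
      = μ Aplus := by
  set νp := μ.toJordanDecomposition.posPart
  set νm := μ.toJordanDecomposition.negPart
  set G := {x | ∀ᶠ r in 𝓝[>] (0 : ℝ), νm (ball x r) ≤ ((9 / 10 : ℝ≥0) : ℝ≥0∞) * νp (ball x r)}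
  have hgood : {x : EuclideanSpace ℝ (Fin n) | x ∈ Aplus ∧ ∃ δ : ℝ, 0 < δ ∧
      ∀ r : ℝ, 0 < r → r < δ → (νp (ball x r)).toReal ≤ 10 * μ (ball x r)} = Aplus ∩ G := by
    ext x
    simp only [G, νp, νm, mem_ofPred_eq, mem_inter_iff, (nhdsGT_basis (0 : ℝ)).eventually_iff,
      mem_Ioo, and_imp, μ.toReal_posPart_le_ten_mul_iff measurableSet_ball]
  have hG : MeasurableSet G := measurableSet_setOf_eventually_measure_ball_le νm νp _
  have hνp : νp (Aplus \ G) = 0 := measure_mono_null (fun x hx => hx.2)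
    (ae_iff.1 (μ.toJordanDecomposition.mutuallySingular.symm.ae_eventually_measure_ball_le_mul
      (by norm_num)))
  have hνm : νm (Aplus \ G) = 0 :=
    measure_mono_null sdiff_subset (μ.negPart_eq_zero_of_zero_le_restrict hAplus hpos)
  have hnull : μ (Aplus \ G) = 0 :=
    μ.null_of_totalVariation_zero (by simp [SignedMeasure.totalVariation, νp, νm, hνp, hνm])
  rw [hgood, ← μ.of_add_of_sdiff (hAplus.inter hG) hAplus inter_subset_left, sdiff_self_inter,
    hnull, add_zero]

/-- **A soft substitute for the Lebesgue differentiation theorem.** Let `μ` be a finite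
signed Borel measure on `ℝⁿ` with Hahn decomposition `ℝⁿ = A₊ ∪ A₋` (`A₋ = A₊ᶜ`) and
positive part `μ₊`. Let
`P₊ = {x ∈ A₊ : ∃ δ > 0, ∀ r < δ, μ₊(B_r(x)) ≤ 10 μ(B_r(x))}`.
Then `μ(P₊) = μ(A₊)`. -/
theorem measure_of_good_points_eq (n : ℕ)
    (μ : SignedMeasure (EuclideanSpace ℝ (Fin n)))
    (Aplus : Set (EuclideanSpace ℝ (Fin n))) (hAplus : MeasurableSet Aplus)
    (hpos : 0 ≤[Aplus] μ) (hneg : μ ≤[Aplusᶜ] 0) :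
    μ {x : EuclideanSpace ℝ (Fin n) | x ∈ Aplus ∧ ∃ δ : ℝ, 0 < δ ∧
        ∀ r : ℝ, 0 < r → r < δ →
          (μ.toJordanDecomposition.posPart (Metric.ball x r)).toReal
            ≤ 10 * μ (Metric.ball x r)}
      = μ Aplus :=
  measure_of_good_points_eq_general n μ Aplus hAplus hpos
end
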